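/- For all n ≥ 1, the polynomial B_{2n+1}(x) = Σ_{σ ∈ UD_{2n+1}} x^{mmp^{(1,0,0,0)}(σ)} satisfies the recursion B_{2n+1}(x) = Σ_{k=1}^{n} C(2n, 2k-1) · B_{2k-1}(1) · x^{2k-1} · B_{2n-2k+1}(x), where B_{2k-1}(1) = |UD_{2k-1}|. -/
import Mathlib


open Finset

/-- Number of indices `i` such that there exists `j > i` with `σ j > σ i`
    (the statistic mmp^{(1,0,0,0)}). -/
noncomputable def mmp1000 {n : ℕ} (σ : Equiv.Perm (Fin n)) : ℕ :=
  (Finset.univ.filter (fun i : Fin n => ∃ j : Fin n, i < j ∧ σ i < σ j)).card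

/-- Number of indices `i` such that there exists `j < i` with `σ j > σ i`
    (the statistic mmp^{(0,1,0,0)}). -/
noncomputable def mmp0100 {n : ℕ} (σ : Equiv.Perm (Fin n)) : ℕ :=
  (Finset.univ.filter (fun i : Fin n => ∃ j : Fin n, j < i ∧ σ i < σ j)).card

/-- Number of indices `i` such that there exists `j > i` with `σ j < σ i`
    (the statistic mmp^{(0,0,0,1)}). -/
noncomputable def mmp0001 {n : ℕ} (σ : Equiv.Perm (Fin n)) : ℕ :=
  (Finset.univ.filter (fun i : Fin n => ∃ j : Fin n, i < j ∧ σ j < σ i)).card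

/-- σ is up-down: σ(1) < σ(2) > σ(3) < σ(4) > ⋯ (0-indexed: ascent at even indices). -/
def IsUpDown {n : ℕ} (σ : Equiv.Perm (Fin n)) : Prop :=
  ∀ i : Fin n, ∀ h : (i : ℕ) + 1 < n,
    if (i : ℕ) % 2 = 0 then σ i < σ ⟨(i : ℕ) + 1, h⟩ else σ ⟨(i : ℕ) + 1, h⟩ < σ i

/-- σ is down-up: σ(1) > σ(2) < σ(3) > σ(4) < ⋯ (0-indexed: descent at even indices). -/
def IsDownUp {n : ℕ} (σ : Equiv.Perm (Fin n)) : Prop :=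
  ∀ i : Fin n, ∀ h : (i : ℕ) + 1 < n,
    if (i : ℕ) % 2 = 0 then σ ⟨(i : ℕ) + 1, h⟩ < σ i else σ i < σ ⟨(i : ℕ) + 1, h⟩

open scoped Classical in
/-- The set of up-down permutations of length `m`. -/
noncomputable def UDset (m : ℕ) : Finset (Equiv.Perm (Fin m)) :=
  Finset.univ.filter (fun σ => IsUpDown σ)

open scoped Classical in
/-- The set of down-up permutations of length `m`. -/
noncomputable def DUset (m : ℕ) : Finset (Equiv.Perm (Fin m)) :=
  Finset.univ.filter (fun σ => IsDownUp σ)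

/-- The reverse of σ: σ^r(i) = σ(n+1-i). -/
def permReverse {n : ℕ} (σ : Equiv.Perm (Fin n)) : Equiv.Perm (Fin n) :=
  Fin.revPerm.trans σ

/-- The complement of σ: σ^c(i) = n+1-σ(i). -/
def permComplement {n : ℕ} (σ : Equiv.Perm (Fin n)) : Equiv.Perm (Fin n) :=
  σ.trans Fin.revPerm

/-- A_{2n}(x) = Σ_{σ ∈ UD_{2n}} x^{mmp^{(1,0,0,0)}(σ)}. -/
noncomputable def Apoly (n : ℕ) (x : ℤ) : ℤ :=
  ∑ σ ∈ UDset (2 * n), x ^ mmp1000 σ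

/-- B_{2n+1}(x) = Σ_{σ ∈ UD_{2n+1}} x^{mmp^{(1,0,0,0)}(σ)}. -/
noncomputable def Bpoly (n : ℕ) (x : ℤ) : ℤ :=
  ∑ σ ∈ UDset (2 * n + 1), x ^ mmp1000 σ

/-- C_{2n}(x) = Σ_{σ ∈ DU_{2n}} x^{mmp^{(1,0,0,0)}(σ)}. -/
noncomputable def Cpoly (n : ℕ) (x : ℤ) : ℤ :=
  ∑ σ ∈ DUset (2 * n), x ^ mmp1000 σ

/-- D_{2n+1}(x) = Σ_{σ ∈ DU_{2n+1}} x^{mmp^{(1,0,0,0)}(σ)}. -/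
noncomputable def Dpoly (n : ℕ) (x : ℤ) : ℤ :=
  ∑ σ ∈ DUset (2 * n + 1), x ^ mmp1000 σ

/-- Number of up-down permutations of length m. -/
noncomputable def udCount (m : ℕ) : ℕ := (UDset m).card

/-- Number of down-up permutations of length m. -/
noncomputable def duCount (m : ℕ) : ℕ := (DUset m).card

open scoped Classical in
/-- |{σ ∈ UD_{2m} : mmp^{(1,0,0,0)}(σ) = c}|. -/
noncomputable def AcountEq (m c : ℕ) : ℕ :=
  ((UDset (2 * m)).filter (fun σ => mmp1000 σ = c)).card

open scoped Classical in
/-- |{σ ∈ DU_{2m+1} : mmp^{(1,0,0,0)}(σ) = c}|. -/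
noncomputable def DcountEq (m c : ℕ) : ℕ :=
  ((DUset (2 * m + 1)).filter (fun σ => mmp1000 σ = c)).card

open scoped Classical in
/-- |{σ ∈ UD_{2m+1} : mmp^{(1,0,0,0)}(σ) = c}|. -/
noncomputable def BcountEq (m c : ℕ) : ℕ :=
  ((UDset (2 * m + 1)).filter (fun σ => mmp1000 σ = c)).card

open scoped Classical in
/-- |{σ ∈ DU_{2m} : mmp^{(1,0,0,0)}(σ) = c}|. -/
noncomputable def CcountEq (m c : ℕ) : ℕ :=
  ((DUset (2 * m)).filter (fun σ => mmp1000 σ = c)).card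

open Finset

lemma orderIsoOfFin_congr {α : Type*} [LinearOrder α] {m : ℕ} {s t : Finset α}
    (hst : s = t) (h : s.card = m) (h' : t.card = m) (a : Fin m) :
    (s.orderIsoOfFin h a : α) = t.orderIsoOfFin h' a := by subst hst; rfl

lemma perm_eq_of_lt_iff {m : ℕ} (π τ : Equiv.Perm (Fin m))
    (h : ∀ i j, π i < π j ↔ τ i < τ j) : π = τ := by
  have hlt : ∀ a b : Fin m, τ (π.symm a) < τ (π.symm b) ↔ a < b := by
    intro a b
    rw [← h]
    simp
  let e : Fin m ≃o Fin m :=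
    { toEquiv := π.symm.trans τ
      map_rel_iff' := by
        intro a b
        simp only [Equiv.trans_apply, Equiv.coe_fn_mk]
        rw [← not_lt, ← not_lt, hlt] }
  have he : e = OrderIso.refl (Fin m) := Subsingleton.elim _ _
  apply Equiv.ext
  intro i
  have h1 : e (π i) = τ i := by
    show τ (π.symm (π i)) = τ i
    rw [Equiv.symm_apply_apply]
  rw [he] at h1
  simpa using h1

noncomputable def patt {m N : ℕ} (f : Fin m → Fin N) (hf : Function.Injective f) :
    Equiv.Perm (Fin m) := by
  have hcard : (Finset.image f univ).card = m := by
    rw [Finset.card_image_of_injective _ hf, Finset.card_univ, Fintype.card_fin]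
  exact Equiv.ofBijective
    (fun i => ((Finset.image f univ).orderIsoOfFin hcard).symm
        ⟨f i, Finset.mem_image_of_mem f (Finset.mem_univ i)⟩)
    (Finite.injective_iff_bijective.mp (fun a b hab => hf (by
      simpa [Subtype.ext_iff] using
        congrArg ((Finset.image f univ).orderIsoOfFin hcard) hab)))

lemma patt_lt {m N : ℕ} (f : Fin m → Fin N) (hf : Function.Injective f) (i j : Fin m) :
    patt f hf i < patt f hf j ↔ f i < f j := by
  simp only [patt, Equiv.ofBijective_apply, OrderIso.lt_iff_lt, Subtype.mk_lt_mk]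

lemma patt_orderIso {m N : ℕ} (f : Fin m → Fin N) (hf : Function.Injective f)
    (h : (Finset.image f univ).card = m) (i : Fin m) :
    ((Finset.image f univ).orderIsoOfFin h (patt f hf i) : Fin N) = f i := by
  simp only [patt, Equiv.ofBijective_apply, OrderIso.apply_symm_apply]
variable {n' : ℕ}

def prefF (m : ℕ) (hm : m ≤ n') (σ : Equiv.Perm (Fin (n'+1))) : Fin m → Fin (n'+1) :=
  fun i => σ ⟨i.val, by have := i.isLt; omega⟩

def sufF (m : ℕ) (hm : m ≤ n') (σ : Equiv.Perm (Fin (n'+1))) : Fin (n' - m) → Fin (n'+1) :=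
  fun j => σ ⟨m + 1 + j.val, by have := j.isLt; omega⟩

lemma prefF_inj (m : ℕ) (hm : m ≤ n') (σ : Equiv.Perm (Fin (n'+1))) :
    Function.Injective (prefF m hm σ) := fun a b hab => by
  have h2 := congrArg Fin.val (σ.injective hab)
  exact Fin.ext h2

lemma sufF_inj (m : ℕ) (hm : m ≤ n') (σ : Equiv.Perm (Fin (n'+1))) :
    Function.Injective (sufF m hm σ) := fun a b hab => by
  have h2 := congrArg Fin.val (σ.injective hab)
  simp only at h2
  exact Fin.ext (by omega)

def Sset (m : ℕ) (hm : m ≤ n') (σ : Equiv.Perm (Fin (n'+1))) : Finset (Fin (n'+1)) :=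
  Finset.image (prefF m hm σ) univ

noncomputable def tauOf (m : ℕ) (hm : m ≤ n') (σ : Equiv.Perm (Fin (n'+1))) :
    Equiv.Perm (Fin m) := patt (prefF m hm σ) (prefF_inj m hm σ)

noncomputable def rhoOf (m : ℕ) (hm : m ≤ n') (σ : Equiv.Perm (Fin (n'+1))) :
    Equiv.Perm (Fin (n' - m)) := patt (sufF m hm σ) (sufF_inj m hm σ)

lemma Tcard (m : ℕ) (S : Finset (Fin (n'+1))) (hS : S.card = m)
    (htop : Fin.last n' ∉ S) (hm : m ≤ n') :
    ((insert (Fin.last n') S)ᶜ : Finset (Fin (n'+1))).card = n' - m := by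
  rw [Finset.card_compl, Finset.card_insert_of_notMem htop, hS]
  simp only [Fintype.card_fin]
  omega

noncomputable def gfun (m : ℕ) (hm : m ≤ n') (S : Finset (Fin (n'+1))) (hS : S.card = m)
    (htop : Fin.last n' ∉ S) (τ : Equiv.Perm (Fin m)) (ρ : Equiv.Perm (Fin (n' - m))) :
    Fin (n'+1) → Fin (n'+1) := fun i =>
  if h : i.val < m then (S.orderIsoOfFin hS (τ ⟨i.val, h⟩) : Fin (n'+1))
  else if h2 : i.val = m then Fin.last n'
  else ((insert (Fin.last n') S)ᶜ.orderIsoOfFin (Tcard m S hS htop hm)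
      (ρ ⟨i.val - (m+1), by have := i.isLt; omega⟩) : Fin (n'+1))

lemma gfun_lt (m : ℕ) (hm : m ≤ n') (S : Finset (Fin (n'+1))) (hS : S.card = m)
    (htop : Fin.last n' ∉ S) (τ : Equiv.Perm (Fin m)) (ρ : Equiv.Perm (Fin (n' - m)))
    (i : Fin (n'+1)) (h : i.val < m) :
    gfun m hm S hS htop τ ρ i = (S.orderIsoOfFin hS (τ ⟨i.val, h⟩) : Fin (n'+1)) := by
  simp only [gfun, dif_pos h]

lemma gfun_mid (m : ℕ) (hm : m ≤ n') (S : Finset (Fin (n'+1))) (hS : S.card = m)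
    (htop : Fin.last n' ∉ S) (τ : Equiv.Perm (Fin m)) (ρ : Equiv.Perm (Fin (n' - m)))
    (i : Fin (n'+1)) (h : i.val = m) :
    gfun m hm S hS htop τ ρ i = Fin.last n' := by
  simp only [gfun, dif_neg (by omega : ¬ i.val < m), dif_pos h]

lemma gfun_gt (m : ℕ) (hm : m ≤ n') (S : Finset (Fin (n'+1))) (hS : S.card = m)
    (htop : Fin.last n' ∉ S) (τ : Equiv.Perm (Fin m)) (ρ : Equiv.Perm (Fin (n' - m)))
    (i : Fin (n'+1)) (h : m < i.val) :
    gfun m hm S hS htop τ ρ i = ((insert (Fin.last n') S)ᶜ.orderIsoOfFin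
      (Tcard m S hS htop hm) (ρ ⟨i.val - (m+1), by have := i.isLt; omega⟩) : Fin (n'+1)) := by
  simp only [gfun, dif_neg (by omega : ¬ i.val < m), dif_neg (by omega : ¬ i.val = m)]

lemma gfun_inj (m : ℕ) (hm : m ≤ n') (S : Finset (Fin (n'+1))) (hS : S.card = m)
    (htop : Fin.last n' ∉ S) (τ : Equiv.Perm (Fin m)) (ρ : Equiv.Perm (Fin (n' - m))) :
    Function.Injective (gfun m hm S hS htop τ ρ) := by
  intro a b hab
  have memS : ∀ i : Fin (n'+1), ∀ h : i.val < m, gfun m hm S hS htop τ ρ i ∈ S := by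
    intro i h
    rw [gfun_lt m hm S hS htop τ ρ i h]
    exact (S.orderIsoOfFin hS _).2
  have memT : ∀ i : Fin (n'+1), m < i.val →
      gfun m hm S hS htop τ ρ i ∈ ((insert (Fin.last n') S)ᶜ : Finset (Fin (n'+1))) := by
    intro i h
    rw [gfun_gt m hm S hS htop τ ρ i h]
    exact ((insert (Fin.last n') S)ᶜ.orderIsoOfFin _ _).2
  rcases lt_trichotomy a.val m with ha | ha | ha <;>
    rcases lt_trichotomy b.val m with hb | hb | hb
  · -- both in S branch
    rw [gfun_lt m hm S hS htop τ ρ a ha, gfun_lt m hm S hS htop τ ρ b hb] at hab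
    have h3 : τ ⟨a.val, ha⟩ = τ ⟨b.val, hb⟩ :=
      (S.orderIsoOfFin hS).injective (Subtype.ext hab)
    have h4 := congrArg Fin.val (τ.injective h3)
    exact Fin.ext h4
  · exfalso
    have h1 := memS a ha
    rw [hab, gfun_mid m hm S hS htop τ ρ b hb] at h1
    exact htop h1
  · exfalso
    have h1 := memS a ha
    have h2 := memT b hb
    rw [hab] at h1
    rw [Finset.mem_compl] at h2
    exact h2 (Finset.mem_insert_of_mem h1)
  · exfalso
    have h1 := memS b hb
    rw [← hab, gfun_mid m hm S hS htop τ ρ a ha] at h1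
    exact htop h1
  · exact Fin.ext (ha.trans hb.symm)
  · exfalso
    have h2 := memT b hb
    rw [← hab, gfun_mid m hm S hS htop τ ρ a ha, Finset.mem_compl] at h2
    exact h2 (Finset.mem_insert_self _ _)
  · exfalso
    have h1 := memS b hb
    have h2 := memT a ha
    rw [← hab] at h1
    rw [Finset.mem_compl] at h2
    exact h2 (Finset.mem_insert_of_mem h1)
  · exfalso
    have h2 := memT a ha
    rw [hab, gfun_mid m hm S hS htop τ ρ b hb, Finset.mem_compl] at h2
    exact h2 (Finset.mem_insert_self _ _)
  · -- both in T branch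
    rw [gfun_gt m hm S hS htop τ ρ a ha, gfun_gt m hm S hS htop τ ρ b hb] at hab
    have h3 := ((insert (Fin.last n') S)ᶜ.orderIsoOfFin (Tcard m S hS htop hm)).injective
      (Subtype.ext hab)
    have h4 := congrArg Fin.val (ρ.injective h3)
    simp only at h4
    exact Fin.ext (by omega)

noncomputable def glue (m : ℕ) (hm : m ≤ n') (S : Finset (Fin (n'+1))) (hS : S.card = m)
    (htop : Fin.last n' ∉ S) (τ : Equiv.Perm (Fin m)) (ρ : Equiv.Perm (Fin (n' - m))) :
    Equiv.Perm (Fin (n'+1)) :=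
  Equiv.ofBijective _ (Finite.injective_iff_bijective.mp (gfun_inj m hm S hS htop τ ρ))

lemma glue_apply (m : ℕ) (hm : m ≤ n') (S : Finset (Fin (n'+1))) (hS : S.card = m)
    (htop : Fin.last n' ∉ S) (τ : Equiv.Perm (Fin m)) (ρ : Equiv.Perm (Fin (n' - m)))
    (i : Fin (n'+1)) : glue m hm S hS htop τ ρ i = gfun m hm S hS htop τ ρ i := rfl
lemma Sset_card (m : ℕ) (hm : m ≤ n') (σ : Equiv.Perm (Fin (n'+1))) :
    (Sset m hm σ).card = m := by
  rw [Sset, Finset.card_image_of_injective _ (prefF_inj m hm σ), Finset.card_univ,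
    Fintype.card_fin]

lemma Sset_not_top (m : ℕ) (hm : m ≤ n') (σ : Equiv.Perm (Fin (n'+1)))
    (hσ : σ ⟨m, by omega⟩ = Fin.last n') : Fin.last n' ∉ Sset m hm σ := by
  intro hmem
  rw [Sset, Finset.mem_image] at hmem
  obtain ⟨i, _, hi⟩ := hmem
  have h2 := σ.injective (hi.trans hσ.symm)
  have h3 := congrArg Fin.val h2
  simp only [prefF] at h3
  have := i.isLt
  omega

lemma sufF_image (m : ℕ) (hm : m ≤ n') (σ : Equiv.Perm (Fin (n'+1)))
    (hσ : σ ⟨m, by omega⟩ = Fin.last n') :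
    Finset.image (sufF m hm σ) univ = (insert (Fin.last n') (Sset m hm σ))ᶜ := by
  apply Finset.eq_of_subset_of_card_le
  · intro a ha
    rw [Finset.mem_image] at ha
    obtain ⟨j, _, hj⟩ := ha
    rw [Finset.mem_compl, Finset.mem_insert]
    rintro (h1 | h1)
    · rw [h1] at hj
      have h2 := congrArg Fin.val (σ.injective (hj.trans hσ.symm))
      simp only [sufF] at h2
      omega
    · rw [← hj, Sset, Finset.mem_image] at h1
      obtain ⟨i, _, hi⟩ := h1
      have h2 := congrArg Fin.val (σ.injective hi)
      simp only [prefF, sufF] at h2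
      have := i.isLt
      omega
  · rw [Tcard m (Sset m hm σ) (Sset_card m hm σ) (Sset_not_top m hm σ hσ) hm,
      Finset.card_image_of_injective _ (sufF_inj m hm σ), Finset.card_univ, Fintype.card_fin]

lemma glue_unglue (m : ℕ) (hm : m ≤ n') (σ : Equiv.Perm (Fin (n'+1)))
    (hσ : σ ⟨m, by omega⟩ = Fin.last n') :
    glue m hm (Sset m hm σ) (Sset_card m hm σ) (Sset_not_top m hm σ hσ)
      (tauOf m hm σ) (rhoOf m hm σ) = σ := by
  apply Equiv.ext
  intro i
  rw [glue_apply]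
  rcases lt_trichotomy i.val m with h | h | h
  · rw [gfun_lt _ _ _ _ _ _ _ _ h]
    exact (patt_orderIso (prefF m hm σ) (prefF_inj m hm σ) _ ⟨i.val, h⟩).trans
      (congrArg σ (Fin.ext rfl))
  · rw [gfun_mid _ _ _ _ _ _ _ _ h]
    rw [show i = (⟨m, by omega⟩ : Fin (n'+1)) from Fin.ext h, hσ]
  · rw [gfun_gt _ _ _ _ _ _ _ _ h]
    have himg : (Finset.image (sufF m hm σ) univ).card = n' - m := by
      rw [Finset.card_image_of_injective _ (sufF_inj m hm σ), Finset.card_univ, Fintype.card_fin]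
    have h1 := orderIsoOfFin_congr (sufF_image m hm σ hσ) himg
      (Tcard m (Sset m hm σ) (Sset_card m hm σ) (Sset_not_top m hm σ hσ) hm)
      (rhoOf m hm σ ⟨i.val - (m+1), by have := i.isLt; omega⟩)
    rw [← h1]
    exact (patt_orderIso (sufF m hm σ) (sufF_inj m hm σ) himg _).trans
      (congrArg σ (Fin.ext (by show m + 1 + (i.val - (m+1)) = i.val; omega)))

lemma glue_mid (m : ℕ) (hm : m ≤ n') (S : Finset (Fin (n'+1))) (hS : S.card = m)
    (htop : Fin.last n' ∉ S) (τ : Equiv.Perm (Fin m)) (ρ : Equiv.Perm (Fin (n' - m))) :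
    glue m hm S hS htop τ ρ ⟨m, by omega⟩ = Fin.last n' := by
  rw [glue_apply]; exact gfun_mid _ _ _ _ _ _ _ _ rfl

lemma prefF_glue (m : ℕ) (hm : m ≤ n') (S : Finset (Fin (n'+1))) (hS : S.card = m)
    (htop : Fin.last n' ∉ S) (τ : Equiv.Perm (Fin m)) (ρ : Equiv.Perm (Fin (n' - m)))
    (i : Fin m) :
    prefF m hm (glue m hm S hS htop τ ρ) i = (S.orderIsoOfFin hS (τ i) : Fin (n'+1)) := by
  rw [prefF]
  rw [glue_apply, gfun_lt _ _ _ _ _ _ _ _ i.isLt]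

lemma sufF_glue (m : ℕ) (hm : m ≤ n') (S : Finset (Fin (n'+1))) (hS : S.card = m)
    (htop : Fin.last n' ∉ S) (τ : Equiv.Perm (Fin m)) (ρ : Equiv.Perm (Fin (n' - m)))
    (j : Fin (n' - m)) :
    sufF m hm (glue m hm S hS htop τ ρ) j =
      ((insert (Fin.last n') S)ᶜ.orderIsoOfFin (Tcard m S hS htop hm) (ρ j) : Fin (n'+1)) := by
  have hidx : ∀ pf, (⟨m + 1 + j.val - (m + 1), pf⟩ : Fin (n' - m)) = j :=
    fun pf => Fin.ext (by simp)
  rw [sufF, glue_apply, gfun_gt _ _ _ _ _ _ _ _ (by omega : m < (m + 1 + j.val)), hidx]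

lemma Sset_glue (m : ℕ) (hm : m ≤ n') (S : Finset (Fin (n'+1))) (hS : S.card = m)
    (htop : Fin.last n' ∉ S) (τ : Equiv.Perm (Fin m)) (ρ : Equiv.Perm (Fin (n' - m))) :
    Sset m hm (glue m hm S hS htop τ ρ) = S := by
  apply Finset.eq_of_subset_of_card_le
  · intro a ha
    rw [Sset, Finset.mem_image] at ha
    obtain ⟨i, _, hi⟩ := ha
    rw [prefF_glue] at hi
    rw [← hi]
    exact (S.orderIsoOfFin hS _).2
  · rw [hS, Sset_card]

lemma tauOf_glue (m : ℕ) (hm : m ≤ n') (S : Finset (Fin (n'+1))) (hS : S.card = m)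
    (htop : Fin.last n' ∉ S) (τ : Equiv.Perm (Fin m)) (ρ : Equiv.Perm (Fin (n' - m))) :
    tauOf m hm (glue m hm S hS htop τ ρ) = τ := by
  apply perm_eq_of_lt_iff
  intro i j
  rw [tauOf, patt_lt, prefF_glue, prefF_glue]
  simp only [Subtype.coe_lt_coe, OrderIso.lt_iff_lt]

lemma rhoOf_glue (m : ℕ) (hm : m ≤ n') (S : Finset (Fin (n'+1))) (hS : S.card = m)
    (htop : Fin.last n' ∉ S) (τ : Equiv.Perm (Fin m)) (ρ : Equiv.Perm (Fin (n' - m))) :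
    rhoOf m hm (glue m hm S hS htop τ ρ) = ρ := by
  apply perm_eq_of_lt_iff
  intro i j
  rw [rhoOf, patt_lt, sufF_glue, sufF_glue]
  simp only [Subtype.coe_lt_coe, OrderIso.lt_iff_lt]
lemma tau_lt_iff (m : ℕ) (hm : m ≤ n') (σ : Equiv.Perm (Fin (n'+1))) (i j : Fin m) :
    tauOf m hm σ i < tauOf m hm σ j ↔
      σ ⟨i.val, by have := i.isLt; omega⟩ < σ ⟨j.val, by have := j.isLt; omega⟩ := by
  rw [tauOf, patt_lt]; exact Iff.rfl

lemma rho_lt_iff (m : ℕ) (hm : m ≤ n') (σ : Equiv.Perm (Fin (n'+1))) (i j : Fin (n' - m)) :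
    rhoOf m hm σ i < rhoOf m hm σ j ↔
      σ ⟨m + 1 + i.val, by have := i.isLt; omega⟩ < σ ⟨m + 1 + j.val, by have := j.isLt; omega⟩ := by
  rw [rhoOf, patt_lt]; exact Iff.rfl

lemma sigma_lt_top (m : ℕ) (hm : m ≤ n') (σ : Equiv.Perm (Fin (n'+1)))
    (hσ : σ ⟨m, by omega⟩ = Fin.last n') (a : Fin (n'+1)) (ha : a.val ≠ m) :
    σ a < Fin.last n' := by
  rw [Fin.lt_last_iff_ne_last]
  intro hc
  exact ha (congrArg Fin.val (σ.injective (hc.trans hσ.symm)))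

lemma isUpDown_iff (m : ℕ) (hm : m ≤ n') (hm2 : m % 2 = 1) (σ : Equiv.Perm (Fin (n'+1)))
    (hσ : σ ⟨m, by omega⟩ = Fin.last n') :
    IsUpDown σ ↔ IsUpDown (tauOf m hm σ) ∧ IsUpDown (rhoOf m hm σ) := by
  constructor
  · intro hud
    constructor
    · intro i h
      have key := hud ⟨i.val, by have := i.isLt; omega⟩
        (show i.val + 1 < n' + 1 by have := i.isLt; omega)
      by_cases hpar : i.val % 2 = 0
      · rw [if_pos hpar] at key ⊢
        rw [tau_lt_iff]
        exact key
      · rw [if_neg hpar] at key ⊢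
        rw [tau_lt_iff]
        exact key
    · intro j h
      have key := hud ⟨m + 1 + j.val, by have := j.isLt; omega⟩
        (show m + 1 + j.val + 1 < n' + 1 by have := j.isLt; omega)
      by_cases hpar : j.val % 2 = 0
      · rw [if_pos hpar]
        rw [if_pos (show (m + 1 + j.val) % 2 = 0 by omega)] at key
        rw [rho_lt_iff]
        exact key
      · rw [if_neg hpar]
        rw [if_neg (show ¬ (m + 1 + j.val) % 2 = 0 by omega)] at key
        rw [rho_lt_iff]
        exact key
  · rintro ⟨htau, hrho⟩
    intro i h
    rcases lt_trichotomy (i.val + 1) m with hc | hc | hc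
    · have key := htau ⟨i.val, by omega⟩ (show i.val + 1 < m from hc)
      by_cases hpar : i.val % 2 = 0
      · rw [if_pos hpar] at key ⊢
        rw [tau_lt_iff] at key
        exact key
      · rw [if_neg hpar] at key ⊢
        rw [tau_lt_iff] at key
        exact key
    · -- i.val + 1 = m : ascent into the top
      have hpar : i.val % 2 = 0 := by omega
      rw [if_pos hpar]
      have h3 : σ ⟨i.val + 1, h⟩ = Fin.last n' := by
        rw [show (⟨i.val + 1, h⟩ : Fin (n'+1)) = ⟨m, by omega⟩ from Fin.ext hc]
        exact hσ
      rw [h3]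
      exact sigma_lt_top m hm σ hσ i (by omega)
    · rcases lt_trichotomy i.val m with hd | hd | hd
      · omega
      · -- i.val = m : descent from the top
        have hpar : ¬ i.val % 2 = 0 := by omega
        rw [if_neg hpar]
        have h3 : σ i = Fin.last n' := by
          rw [show i = (⟨m, by omega⟩ : Fin (n'+1)) from Fin.ext hd]
          exact hσ
        rw [h3]
        exact sigma_lt_top m hm σ hσ _ (show i.val + 1 ≠ m by omega)
      · -- both in the suffix
        obtain ⟨a, ha⟩ : ∃ a : Fin (n' - m), a.val = i.val - (m+1) :=
          ⟨⟨i.val - (m+1), by omega⟩, rfl⟩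
        have hb2 : a.val + 1 < n' - m := by omega
        have key := hrho a hb2
        have e1 : ∀ pf, (⟨m + 1 + a.val, pf⟩ : Fin (n'+1)) = i :=
          fun pf => Fin.ext (show m + 1 + a.val = i.val by omega)
        have e2 : ∀ pf, (⟨m + 1 + (a.val + 1), pf⟩ : Fin (n'+1)) = (⟨i.val + 1, h⟩ : Fin (n'+1)) :=
          fun pf => Fin.ext (show m + 1 + (a.val + 1) = i.val + 1 by omega)
        by_cases hpar : i.val % 2 = 0
        · rw [if_pos hpar]
          rw [if_pos (show a.val % 2 = 0 by omega)] at key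
          rw [rho_lt_iff] at key
          simp only [e1, e2] at key
          exact key
        · rw [if_neg hpar]
          rw [if_neg (show ¬ a.val % 2 = 0 by omega)] at key
          rw [rho_lt_iff] at key
          simp only [e1, e2] at key
          exact key
lemma mmp_decomp (m : ℕ) (hm : m ≤ n') (σ : Equiv.Perm (Fin (n'+1)))
    (hσ : σ ⟨m, by omega⟩ = Fin.last n') :
    mmp1000 σ = m + mmp1000 (rhoOf m hm σ) := by
  classical
  set ρ := rhoOf m hm σ with hρ
  have hA : Function.Injective (fun i : Fin m => (⟨i.val, by have := i.isLt; omega⟩ : Fin (n'+1))) :=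
    fun a b hab => Fin.ext (by have := congrArg Fin.val hab; simp only at this; omega)
  have hB : Function.Injective (fun j : Fin (n' - m) => (⟨m + 1 + j.val, by have := j.isLt; omega⟩ : Fin (n'+1))) :=
    fun a b hab => Fin.ext (by have := congrArg Fin.val hab; simp only at this; omega)
  set A : Finset (Fin (n'+1)) :=
    Finset.image (fun i : Fin m => (⟨i.val, by have := i.isLt; omega⟩ : Fin (n'+1))) univ with hAdef
  set B : Finset (Fin (n'+1)) :=
    Finset.image (fun j : Fin (n' - m) => (⟨m + 1 + j.val, by have := j.isLt; omega⟩ : Fin (n'+1)))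
      (univ.filter (fun j : Fin (n' - m) => ∃ j' : Fin (n' - m), j < j' ∧ ρ j < ρ j')) with hBdef
  have hunion : (Finset.univ.filter
      (fun i : Fin (n'+1) => ∃ j : Fin (n'+1), i < j ∧ σ i < σ j)) = A ∪ B := by
    ext a
    simp only [Finset.mem_filter, Finset.mem_univ, true_and, Finset.mem_union]
    rcases lt_trichotomy a.val m with hc | hc | hc
    · constructor
      · intro _
        left
        rw [hAdef, Finset.mem_image]
        exact ⟨⟨a.val, hc⟩, Finset.mem_univ _, Fin.ext rfl⟩
      · intro _
        refine ⟨⟨m, by omega⟩, ?_, ?_⟩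
        · show a.val < m; exact hc
        · rw [hσ]
          exact sigma_lt_top m hm σ hσ a (by omega)
    · constructor
      · rintro ⟨j, _, hlt⟩
        exfalso
        have h3 : σ a = Fin.last n' := by
          rw [show a = (⟨m, by omega⟩ : Fin (n'+1)) from Fin.ext hc]
          exact hσ
        rw [h3] at hlt
        exact absurd hlt (not_lt.mpr (Fin.le_last _))
      · rintro (hmem | hmem)
        · exfalso
          rw [hAdef, Finset.mem_image] at hmem
          obtain ⟨i, _, hi⟩ := hmem
          have := congrArg Fin.val hi
          simp only at this
          have := i.isLt
          omega
        · exfalso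
          rw [hBdef, Finset.mem_image] at hmem
          obtain ⟨j, _, hj⟩ := hmem
          have := congrArg Fin.val hj
          simp only at this
          omega
    · obtain ⟨b, hb⟩ : ∃ b : Fin (n' - m), b.val = a.val - (m+1) :=
        ⟨⟨a.val - (m+1), by have := a.isLt; omega⟩, rfl⟩
      have hba : ∀ pf, (⟨m + 1 + b.val, pf⟩ : Fin (n'+1)) = a :=
        fun pf => Fin.ext (show m + 1 + b.val = a.val by omega)
      constructor
      · rintro ⟨j, hij, hlt⟩
        right
        rw [hBdef, Finset.mem_image]
        have hjm : m < j.val := lt_trans hc hij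
        obtain ⟨c, hcv⟩ : ∃ c : Fin (n' - m), c.val = j.val - (m+1) :=
          ⟨⟨j.val - (m+1), by have := j.isLt; omega⟩, rfl⟩
        have hca : ∀ pf, (⟨m + 1 + c.val, pf⟩ : Fin (n'+1)) = j :=
          fun pf => Fin.ext (show m + 1 + c.val = j.val by omega)
        refine ⟨b, ?_, hba _⟩
        rw [Finset.mem_filter]
        refine ⟨Finset.mem_univ _, c, ?_, ?_⟩
        · show b.val < c.val
          have : a.val < j.val := hij
          omega
        · rw [hρ, rho_lt_iff]
          rw [hba, hca]
          exact hlt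
      · rintro (hmem | hmem)
        · exfalso
          rw [hAdef, Finset.mem_image] at hmem
          obtain ⟨i, _, hi⟩ := hmem
          have := congrArg Fin.val hi
          simp only at this
          have := i.isLt
          omega
        · rw [hBdef, Finset.mem_image] at hmem
          obtain ⟨j, hjmem, hj⟩ := hmem
          rw [Finset.mem_filter] at hjmem
          obtain ⟨-, c, hjc, hlt⟩ := hjmem
          rw [hρ, rho_lt_iff] at hlt
          have hjb : j = b := by
            apply Fin.ext
            have := congrArg Fin.val hj
            simp only at this
            omega
          refine ⟨⟨m + 1 + c.val, by have := c.isLt; omega⟩, ?_, ?_⟩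
          · show a.val < m + 1 + c.val
            have h5 : j.val < c.val := hjc
            omega
          · simp only [hjb, hba] at hlt
            exact hlt
  have hdisj : Disjoint A B := by
    rw [Finset.disjoint_left]
    intro a haA haB
    rw [hAdef, Finset.mem_image] at haA
    rw [hBdef, Finset.mem_image] at haB
    obtain ⟨i, _, hi⟩ := haA
    obtain ⟨j, _, hj⟩ := haB
    have h1 := congrArg Fin.val hi
    have h2 := congrArg Fin.val hj
    simp only at h1 h2
    have := i.isLt
    omega
  rw [mmp1000, hunion, Finset.card_union_of_disjoint hdisj]
  congr 1
  · rw [hAdef, Finset.card_image_of_injective _ hA, Finset.card_univ, Fintype.card_fin]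
  · rw [hBdef, Finset.card_image_of_injective _ hB, mmp1000]
lemma pos_parity (n : ℕ) (hn : 1 ≤ n) (σ : Equiv.Perm (Fin (2*n+1))) (hud : IsUpDown σ) :
    (σ.symm (Fin.last (2*n))).val % 2 = 1 ∧ (σ.symm (Fin.last (2*n))).val < 2*n := by
  set p := σ.symm (Fin.last (2*n)) with hpdef
  have hp : σ p = Fin.last (2*n) := Equiv.apply_symm_apply σ _
  have hple : p.val < 2*n + 1 := p.isLt
  have hpar : p.val % 2 = 1 := by
    by_contra hpar
    have hpar0 : p.val % 2 = 0 := by omega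
    rcases lt_or_ge p.val (2*n) with hlt | hge
    · have key := hud p (show p.val + 1 < 2*n+1 by omega)
      rw [if_pos hpar0, hp] at key
      exact absurd key (not_lt.mpr (Fin.le_last _))
    · have hpv : p.val = 2*n := by omega
      have key := hud ⟨2*n-1, by omega⟩ (show 2*n-1+1 < 2*n+1 by omega)
      rw [if_neg (show ¬ (2*n-1) % 2 = 0 by omega)] at key
      have e : (⟨2*n-1+1, show 2*n-1+1 < 2*n+1 by omega⟩ : Fin (2*n+1)) = p :=
        Fin.ext (show 2*n-1+1 = p.val by omega)
      rw [e, hp] at key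
      exact absurd key (not_lt.mpr (Fin.le_last _))
  exact ⟨hpar, by omega⟩

lemma udInnerSumEq (n k : ℕ) (hk1 : 1 ≤ k) (hk2 : k ≤ n) (x : ℤ) :
    ∑ σ ∈ (UDset (2*n+1)).filter
        (fun σ => ((σ.symm (Fin.last (2*n))).val + 1)/2 = k), x ^ mmp1000 σ
    = ∑ p ∈ (Finset.powersetCard (2*k-1)
          ((univ : Finset (Fin (2*n+1))).erase (Fin.last (2*n))))
        ×ˢ ((UDset (2*k-1)) ×ˢ (UDset (2*n - (2*k-1)))),
        x ^ (2*k-1) * x ^ mmp1000 p.2.2 := by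
  classical
  set m := 2*k-1 with hmdef
  have hm : m ≤ 2*n := by omega
  have hm2 : m % 2 = 1 := by omega
  -- facts about membership in the filtered set
  have hmemσ : ∀ σ ∈ (UDset (2*n+1)).filter
      (fun σ => ((σ.symm (Fin.last (2*n))).val + 1)/2 = k),
      IsUpDown σ ∧ σ ⟨m, by omega⟩ = Fin.last (2*n) := by
    intro σ hσ
    rw [Finset.mem_filter] at hσ
    obtain ⟨hσ1, hσ2⟩ := hσ
    rw [UDset, Finset.mem_filter] at hσ1
    have hud := hσ1.2
    have hpar := pos_parity n (le_trans hk1 hk2) σ hud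
    have hpv : (σ.symm (Fin.last (2*n))).val = m := by omega
    refine ⟨hud, ?_⟩
    have : (⟨m, show m < 2*n+1 by omega⟩ : Fin (2*n+1)) = σ.symm (Fin.last (2*n)) :=
      Fin.ext hpv.symm
    rw [this]
    exact Equiv.apply_symm_apply σ _
  -- facts about membership in the product set
  have hpS : ∀ p : Finset (Fin (2*n+1)) × (Equiv.Perm (Fin m) × Equiv.Perm (Fin (2*n - m))),
      p ∈ (Finset.powersetCard m ((univ : Finset (Fin (2*n+1))).erase (Fin.last (2*n))))
        ×ˢ ((UDset m) ×ˢ (UDset (2*n - m))) →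
      (p.1.card = m ∧ Fin.last (2*n) ∉ p.1) ∧ IsUpDown p.2.1 ∧ IsUpDown p.2.2 := by
    intro p hp
    rw [Finset.mem_product] at hp
    obtain ⟨h1, h2⟩ := hp
    rw [Finset.mem_product] at h2
    rw [Finset.mem_powersetCard] at h1
    refine ⟨⟨h1.2, fun hc => ?_⟩, ?_, ?_⟩
    · have := h1.1 hc
      rw [Finset.mem_erase] at this
      exact this.1 rfl
    · have := h2.1; rw [UDset, Finset.mem_filter] at this; exact this.2
    · have := h2.2; rw [UDset, Finset.mem_filter] at this; exact this.2
  refine Finset.sum_bij'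
    (fun σ _ => (Sset m hm σ, (tauOf m hm σ, rhoOf m hm σ)))
    (fun p hp => glue m hm p.1 ((hpS p hp).1.1) ((hpS p hp).1.2) p.2.1 p.2.2)
    ?_ ?_ ?_ ?_ ?_
  · -- hi : image of unglue is in the product set
    intro σ hσ
    obtain ⟨hud, hσtop⟩ := hmemσ σ hσ
    rw [Finset.mem_product, Finset.mem_product, Finset.mem_powersetCard]
    have hudp := (isUpDown_iff m hm hm2 σ hσtop).mp hud
    refine ⟨⟨?_, Sset_card m hm σ⟩, ?_, ?_⟩
    · intro a ha
      simp only [Sset, Finset.mem_image] at ha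
      obtain ⟨i, _, hi⟩ := ha
      rw [Finset.mem_erase]
      refine ⟨?_, Finset.mem_univ _⟩
      intro hc
      rw [hc] at hi
      have h4 := congrArg Fin.val (σ.injective (hi.trans hσtop.symm))
      simp only [prefF] at h4
      have := i.isLt
      omega
    · rw [UDset, Finset.mem_filter]; exact ⟨Finset.mem_univ _, hudp.1⟩
    · rw [UDset, Finset.mem_filter]; exact ⟨Finset.mem_univ _, hudp.2⟩
  · -- hj : glue lands in the filtered set
    intro p hp
    obtain ⟨⟨hcard, htop⟩, hτ, hρ⟩ := hpS p hp
    rw [Finset.mem_filter]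
    have hmid := glue_mid m hm p.1 ((hpS p hp).1.1) ((hpS p hp).1.2) p.2.1 p.2.2
    constructor
    · rw [UDset, Finset.mem_filter]
      refine ⟨Finset.mem_univ _, ?_⟩
      refine (isUpDown_iff m hm hm2 _ hmid).mpr ⟨?_, ?_⟩
      · rw [tauOf_glue]; exact hτ
      · rw [rhoOf_glue]; exact hρ
    · have hsymm : (glue m hm p.1 ((hpS p hp).1.1) ((hpS p hp).1.2) p.2.1 p.2.2).symm
          (Fin.last (2*n)) = ⟨m, by omega⟩ := by
        rw [Equiv.symm_apply_eq]
        exact hmid.symm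
      rw [hsymm]
      show (m + 1) / 2 = k
      omega
  · -- left_inv
    intro σ hσ
    obtain ⟨hud, hσtop⟩ := hmemσ σ hσ
    exact glue_unglue m hm σ hσtop
  · -- right_inv
    intro p hp
    rcases p with ⟨S, τ, ρ⟩
    simp only
    rw [Sset_glue, tauOf_glue, rhoOf_glue]
  · -- values
    intro σ hσ
    obtain ⟨hud, hσtop⟩ := hmemσ σ hσ
    rw [mmp_decomp m hm σ hσtop, pow_add]
theorem stmt4 (n : ℕ) (hn : 1 ≤ n) (x : ℤ) :
    Bpoly n x = ∑ k ∈ Finset.Icc 1 n,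
      (Nat.choose (2 * n) (2 * k - 1) : ℤ) * (udCount (2 * k - 1) : ℤ) *
        x ^ (2 * k - 1) * Bpoly (n - k) x := by
  classical
  have hmaps : ∀ σ ∈ UDset (2*n+1),
      ((σ.symm (Fin.last (2*n))).val + 1)/2 ∈ Finset.Icc 1 n := by
    intro σ hσ
    rw [UDset, Finset.mem_filter] at hσ
    have := pos_parity n hn σ hσ.2
    rw [Finset.mem_Icc]
    omega
  have hfib := Finset.sum_fiberwise_of_maps_to hmaps (fun σ => x ^ mmp1000 σ)
  rw [Bpoly, ← hfib]
  apply Finset.sum_congr rfl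
  intro k hk
  rw [Finset.mem_Icc] at hk
  rw [udInnerSumEq n k hk.1 hk.2 x]
  have hcardA : (Finset.powersetCard (2*k-1)
      ((univ : Finset (Fin (2*n+1))).erase (Fin.last (2*n)))).card
      = Nat.choose (2*n) (2*k-1) := by
    rw [Finset.card_powersetCard, Finset.card_erase_of_mem (Finset.mem_univ _),
      Finset.card_univ, Fintype.card_fin, Nat.add_sub_cancel]
  have harg : 2*n - (2*k-1) = 2*(n-k)+1 := by omega
  rw [Finset.sum_product]
  simp only [Finset.sum_product, Finset.sum_const, nsmul_eq_mul, hcardA]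
  rw [harg, Bpoly, udCount, ← Finset.mul_sum]
  ring
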